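/- arXiv:2510.08134 — 4 statements merged into one kernel-verified Lean document; each statement's English description precedes it below -/
import Mathlib

section
/- The stability function Φ(z) = 1/(1 - z + z²/4) satisfies |Φ(z)| ≤ 1 for every complex number z with Re(z) ≤ 0. -/
theorem Complex.one_le_norm_one_sub_of_re_nonpos {z : ℂ} (hz : z.re ≤ 0) : 1 ≤ ‖1 - z‖ :=
  calc (1 : ℝ) ≤ (1 - z).re := by simpa using hz
    _ ≤ ‖1 - z‖ := Complex.re_le_norm _

/-- A-stability of the CS-EBT2 stability function: `|Φ(z)| ≤ 1` for `Re z ≤ 0`,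
where `Φ(z) = (1 - z + z²/4)⁻¹`. -/
theorem cs_ebt2_A_stable (z : ℂ) (hz : z.re ≤ 0) :
    ‖(1 - z + z ^ 2 / 4)⁻¹‖ ≤ 1 := by
  have hz2 : (z / 2).re ≤ 0 := by simpa using div_nonpos_of_nonpos_of_nonneg hz zero_le_two
  have h : 1 ≤ ‖1 - z / 2‖ := Complex.one_le_norm_one_sub_of_re_nonpos hz2
  rw [show 1 - z + z ^ 2 / 4 = (1 - z / 2) ^ 2 by ring, norm_inv, norm_pow]
  exact inv_le_one_of_one_le₀ (one_le_pow₀ h)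
end

section
/- Applying the CS-EBT2 time discretization to the scalar linear test equation y' = λ₁ y + λ₂ y, treating λ₁ y explicitly and λ₂ y implicitly, yields the one-step recurrence y_{n+1} = Φ(z₁, z₂) y_n with amplification factor Φ(z₁, z₂) = [1 + z₁(2 + z₁)/(2 - z₂) - z₁ z₂ / 4] / (1 - z₂ + z₂²/4), where z₁ = λ₁ Δt and z₂ = λ₂ Δt. That is, if y_half satisfies y_half = y_n + (z₁/2) y_n + (z₂/2) y_half and y_{n+1} satisfies y_{n+1} = y_n + z₁ y_half + z₂ y_{n+1} - (z₂/4)(z₂ y_{n+1} + z₁ y_n), then y_{n+1} = Φ(z₁, z₂) y_n, provided z₂ ≠ 2 and 1 - z₂ + z₂²/4 ≠ 0. -/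
/-!
The predictor is linear in `y_half` with coefficient `1 - z₂/2`, and the corrector is linear in
`y_{n+1}` with coefficient `1 - z₂ + z₂²/4 = (1 - z₂/2)²`. Solving the predictor for `y_half` and
substituting it into the corrector gives `y_{n+1}` as a multiple of `y_n`.
-/

namespace CSEBT2

variable {K : Type*} [Field K] [CharZero K]

lemma one_sub_add_sq_div_four (z : K) : 1 - z + z ^ 2 / 4 = ((2 - z) / 2) ^ 2 := by
  ring

lemma two_sub_ne_zero_of_one_sub_add_sq_div_four_ne_zero {z : K} (h : 1 - z + z ^ 2 / 4 ≠ 0) :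
    2 - z ≠ 0 := by
  rw [one_sub_add_sq_div_four] at h
  exact div_ne_zero_iff.mp (pow_ne_zero_iff two_ne_zero |>.mp h) |>.1

lemma predictor_solve {yn yhalf z1 z2 : K} (hz2 : 2 - z2 ≠ 0)
    (hpred : yhalf = yn + (z1 / 2) * yn + (z2 / 2) * yhalf) :
    yhalf = (2 + z1) / (2 - z2) * yn := by
  rw [div_mul_eq_mul_div, eq_div_iff hz2]
  linear_combination 2 * hpred

lemma corrector_solve {yn yhalf yn1 z1 z2 : K} (hden : 1 - z2 + z2 ^ 2 / 4 ≠ 0)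
    (hcorr : yn1 = yn + z1 * yhalf + z2 * yn1 - (z2 / 4) * (z2 * yn1 + z1 * yn)) :
    yn1 = ((1 - z1 * z2 / 4) * yn + z1 * yhalf) / (1 - z2 + z2 ^ 2 / 4) := by
  rw [eq_div_iff hden]
  linear_combination hcorr

end CSEBT2

theorem cs_ebt2_amplification_general (yn yhalf yn1 z1 z2 : ℂ)
    (hden : 1 - z2 + z2 ^ 2 / 4 ≠ 0)
    (hpred : yhalf = yn + (z1 / 2) * yn + (z2 / 2) * yhalf)
    (hcorr : yn1 = yn + z1 * yhalf + z2 * yn1 - (z2 / 4) * (z2 * yn1 + z1 * yn)) :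
    yn1 = ((1 + z1 * (2 + z1) / (2 - z2) - z1 * z2 / 4) / (1 - z2 + z2 ^ 2 / 4)) * yn := by
  rw [CSEBT2.corrector_solve hden hcorr,
    CSEBT2.predictor_solve (CSEBT2.two_sub_ne_zero_of_one_sub_add_sq_div_four_ne_zero hden) hpred]
  ring

/-- The CS-EBT2 scheme applied to `y' = λ₁ y + λ₂ y` (λ₁ explicit, λ₂ implicit) yields
`y_{n+1} = Φ(z₁,z₂) y_n` with
`Φ(z₁,z₂) = (1 + z₁(2+z₁)/(2-z₂) - z₁z₂/4) / (1 - z₂ + z₂²/4)`. -/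
theorem cs_ebt2_amplification (yn yhalf yn1 z1 z2 : ℂ)
    (hz2 : z2 ≠ 2) (hden : 1 - z2 + z2 ^ 2 / 4 ≠ 0)
    (hpred : yhalf = yn + (z1 / 2) * yn + (z2 / 2) * yhalf)
    (hcorr : yn1 = yn + z1 * yhalf + z2 * yn1 - (z2 / 4) * (z2 * yn1 + z1 * yn)) :
    yn1 = ((1 + z1 * (2 + z1) / (2 - z2) - z1 * z2 / 4) / (1 - z2 + z2 ^ 2 / 4)) * yn :=
  cs_ebt2_amplification_general yn yhalf yn1 z1 z2 hden hpred hcorr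
end

section
/- Second-order consistency of the trapezoidal-with-backward-Taylor source quadrature: let g : ℝ → ℝ be twice continuously differentiable and y : [0, T] → ℝ twice continuously differentiable. Then ∫_{t}^{t+Δt} g(y(s)) ds = (Δt/2)·[2 g(y(t+Δt)) - Δt · g'(y(t))·y'(t+Δt)] + O(Δt³) as Δt → 0⁺; precisely, there exist constants C, δ > 0 such that for all 0 < Δt < δ the difference is bounded by C·Δt³. -/
/-! With `F = g ∘ y` and `a = g'(y t)`, the error is `E₁ h - E₂ h`, where
`E₁ h = ∫_t^{t+h} F - h F(t+h) + (h²/2) F'(t+h)` is the error of the second-order right-endpoint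
Taylor rule and `E₂ h = (h²/2) (g'(y(t+h)) - a) y'(t+h)` is the price of evaluating `g'` at the old
time level. Since `E₁ 0 = 0` and `E₁' h = (h²/2) F''(t+h) = O(h²)`, the mean value theorem gives
`E₁ = O(h³)`; and `E₂ = O(h³)` because `g' ∘ y` is differentiable at `t`. -/

open Asymptotics Filter Topology

theorem isBigO_pow_succ_of_hasDerivAt {E : Type*} [NormedAddCommGroup E] [NormedSpace ℝ E]
    {Φ Φ' : ℝ → E} {n : ℕ} (hΦ : ∀ᶠ s in 𝓝 0, HasDerivAt Φ (Φ' s) s) (hΦ0 : Φ 0 = 0)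
    (hΦ' : Φ' =O[𝓝 0] fun s => s ^ n) : Φ =O[𝓝 0] fun s => s ^ (n + 1) := by
  obtain ⟨c, hc0, hc⟩ := hΦ'.exists_pos
  obtain ⟨ε, hε, hball⟩ := Metric.eventually_nhds_iff_ball.mp (hΦ.and hc.bound)
  refine .of_bound c (Metric.eventually_nhds_iff_ball.mpr ⟨ε, hε, fun h hh => ?_⟩)
  have habs : ∀ s ∈ Set.uIcc 0 h, |s| ≤ |h| := fun s hs => by
    simpa using Set.abs_sub_left_of_mem_uIcc hs
  have hmem : ∀ s ∈ Set.uIcc 0 h, s ∈ Metric.ball (0 : ℝ) ε := fun s hs => by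
    rw [mem_ball_zero_iff] at hh ⊢
    exact (habs s hs).trans_lt hh
  have hbound : ∀ s ∈ Set.uIcc 0 h, ‖Φ' s‖ ≤ c * |h| ^ n := fun s hs =>
    calc ‖Φ' s‖ ≤ c * |s| ^ n := by simpa using (hball s (hmem s hs)).2
      _ ≤ c * |h| ^ n := by gcongr _ * ?_; exact pow_le_pow_left₀ (abs_nonneg s) (habs s hs) n
  have hmvt := Convex.norm_image_sub_le_of_norm_hasDerivWithin_le
    (fun s hs => (hball s (hmem s hs)).1.hasDerivWithinAt) hbound (convex_uIcc 0 h)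
    Set.left_mem_uIcc Set.right_mem_uIcc
  simpa [hΦ0, pow_succ, mul_assoc] using hmvt

theorem exists_pos_bound_of_isBigO_pow {f : ℝ → ℝ} {n : ℕ} (hf : f =O[𝓝 0] fun x => x ^ n) :
    ∃ C δ : ℝ, 0 < C ∧ 0 < δ ∧ ∀ x, 0 < x → x < δ → |f x| ≤ C * x ^ n := by
  obtain ⟨C, hC, hCf⟩ := hf.exists_pos
  obtain ⟨δ, hδ, hball⟩ := Metric.eventually_nhds_iff_ball.mp hCf.bound
  refine ⟨C, δ, hC, hδ, fun x hx hxδ => ?_⟩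
  simpa [abs_of_pos hx] using hball x (by simpa [abs_of_pos hx] using hxδ)

section RightEndpointTaylor

variable {E : Type*} [NormedAddCommGroup E] [NormedSpace ℝ E] [CompleteSpace E]

theorem hasDerivAt_integral_sub_rightTaylor {F : ℝ → E} (hF : ContDiff ℝ 2 F) (t h : ℝ) :
    HasDerivAt
      (fun h : ℝ => (∫ s in t..t + h, F s) - h • F (t + h) + (h ^ 2 / 2) • deriv F (t + h))
      ((h ^ 2 / 2) • deriv (deriv F) (t + h)) h := by
  have hI := (hF.continuous.integral_hasStrictDerivAt t (t + h)).hasDerivAt.comp_const_add t h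
  have hF1 := ((hF.differentiable two_ne_zero) (t + h)).hasDerivAt.comp_const_add t h
  have hF2 := ((hF.deriv'.differentiable one_ne_zero) (t + h)).hasDerivAt.comp_const_add t h
  convert (hI.fun_sub ((hasDerivAt_id' h).fun_smul hF1)).fun_add
    (((hasDerivAt_pow 2 h).div_const 2).fun_smul hF2) using 1
  module

theorem isBigO_integral_sub_rightTaylor {F : ℝ → E} (hF : ContDiff ℝ 2 F) (t : ℝ) :
    (fun h : ℝ => (∫ s in t..t + h, F s) - h • F (t + h) + (h ^ 2 / 2) • deriv F (t + h))
      =O[𝓝 0] fun h => h ^ 3 := by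
  refine isBigO_pow_succ_of_hasDerivAt (.of_forall (hasDerivAt_integral_sub_rightTaylor hF t))
    (by simp) ?_
  have hbdd : (fun h => deriv (deriv F) (t + h)) =O[𝓝 0] fun _ => (1 : ℝ) :=
    (((hF.deriv'.continuous_deriv le_rfl).comp (continuous_const_add t)).tendsto 0).isBigO_one ℝ
  simpa [div_eq_inv_mul] using
    ((isBigO_refl (fun h : ℝ => h ^ 2) _).const_mul_left (1 / 2)).smul hbdd

end RightEndpointTaylor

/-- Second-order consistency of the trapezoidal rule combined with the backward
semi-implicit Taylor expansion used for the CS-EBT2 source quadrature. -/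
theorem cs_ebt2_source_quadrature_consistency (g y : ℝ → ℝ) (t : ℝ)
    (hg : ContDiff ℝ 2 g) (hy : ContDiff ℝ 2 y) :
    ∃ C δ : ℝ, 0 < C ∧ 0 < δ ∧ ∀ Δt : ℝ, 0 < Δt → Δt < δ →
      |(∫ s in t..(t + Δt), g (y s))
        - (Δt / 2) * (2 * g (y (t + Δt)) - Δt * deriv g (y t) * deriv y (t + Δt))|
      ≤ C * Δt ^ 3 := by
  have hchain : ∀ s, deriv (fun s => g (y s)) s = deriv g (y s) * deriv y s := fun s =>
    deriv_comp s (hg.differentiable two_ne_zero (y s)) (hy.differentiable two_ne_zero s)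
  have hshift : Tendsto (fun h : ℝ => t + h) (𝓝 0) (𝓝 t) := by
    simpa using (continuous_const_add t).tendsto 0
  have hlip : (fun h => deriv g (y (t + h)) - deriv g (y t)) =O[𝓝 0] fun h => h := by
    simpa [Function.comp_def] using (((hg.deriv'.differentiable one_ne_zero (y t)).comp t
      (hy.differentiable two_ne_zero t)).isBigO_sub.comp_tendsto hshift)
  have hbdd : (fun h => deriv y (t + h)) =O[𝓝 0] fun _ => (1 : ℝ) :=
    (((hy.continuous_deriv one_le_two).tendsto t).comp hshift).isBigO_one ℝ
  have hcorr : (fun h => h ^ 2 / 2 * ((deriv g (y (t + h)) - deriv g (y t)) * deriv y (t + h)))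
      =O[𝓝 0] fun h => h ^ 3 := by
    refine (((isBigO_refl (fun h : ℝ => h ^ 2) _).const_mul_left (1 / 2)).mul
      (hlip.mul hbdd)).congr (fun h => ?_) (fun h => ?_) <;> ring
  have hrule := isBigO_integral_sub_rightTaylor (F := fun s => g (y s)) (hg.comp hy) t
  refine exists_pos_bound_of_isBigO_pow ((hrule.sub hcorr).congr_left fun h => ?_)
  simp only [smul_eq_mul, hchain]
  ring
end

section
/- On the staggered grid, the combination (1/2)(u_i + u_{i+1}) + (1/8)(u'_i - u'_{i+1}) is a third-order accurate approximation of the midpoint value: if u : ℝ → ℝ is three times continuously differentiable, x_{i+1/2} ∈ ℝ, Δx > 0, u_i = u(x_{i+1/2} - Δx/2), u_{i+1} = u(x_{i+1/2} + Δx/2), and u'_j = Δx·u'(x_j) exactly (j = i, i+1), then (1/2)(u_i + u_{i+1}) + (1/8)(u'_i - u'_{i+1}) - u(x_{i+1/2}) = O(Δx³), i.e., bounded by C·Δx³ with C depending on sup|u'''| on the cell. -/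
/-!
Write `h = Δx / 2` and view the reconstruction error as a function of the half-width `t ∈ [0, h]`:
`E(t) = (u(x - t) + u(x + t)) / 2 + (t / 4) (u'(x - t) - u'(x + t)) - u(x)`.
Then `E(0) = E'(0) = 0`, and the second derivatives of `u` cancel in
`E''(t) = (t / 4) (u'''(x - t) - u'''(x + t))`, so `|E''| ≤ M h / 2` on `[0, h]`. Two applications
of the mean value inequality give `|E(h)| ≤ M h³ / 2 = M Δx³ / 16`.
-/

open Set

theorem ContDiff.hasDerivAt_iteratedDeriv {𝕜 F : Type*} [NontriviallyNormedField 𝕜]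
    [NormedAddCommGroup F] [NormedSpace 𝕜 F] {f : 𝕜 → F} {n : WithTop ℕ∞} {m : ℕ}
    (hf : ContDiff 𝕜 n f) (hmn : m < n) (x : 𝕜) :
    HasDerivAt (iteratedDeriv m f) (iteratedDeriv (m + 1) f x) x := by
  rw [iteratedDeriv_succ]
  exact (hf.differentiable_iteratedDeriv m hmn x).hasDerivAt

section

variable {E : Type*} [NormedAddCommGroup E] [NormedSpace ℝ E]

theorem norm_image_sub_le_of_norm_deriv2_le_segment {g g₁ g₂ : ℝ → E} {a b C : ℝ}
    (hab : a ≤ b) (hg : ∀ t ∈ Icc a b, HasDerivWithinAt g (g₁ t) (Icc a b) t)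
    (hg₁ : ∀ t ∈ Icc a b, HasDerivWithinAt g₁ (g₂ t) (Icc a b) t) (hg₁a : g₁ a = 0)
    (bound : ∀ t ∈ Icc a b, ‖g₂ t‖ ≤ C) :
    ‖g b - g a‖ ≤ C * (b - a) ^ 2 := by
  have bound₁ : ∀ t ∈ Ico a b, ‖g₁ t‖ ≤ C * (b - a) := fun t ht => by
    have hC : 0 ≤ C := (norm_nonneg _).trans (bound a (left_mem_Icc.2 hab))
    have := norm_image_sub_le_of_norm_deriv_le_segment' hg₁
      (fun s hs => bound s (Ico_subset_Icc_self hs)) t (Ico_subset_Icc_self ht)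
    rw [hg₁a, sub_zero] at this
    exact this.trans (by gcongr; exact ht.2.le)
  calc ‖g b - g a‖ ≤ C * (b - a) * (b - a) :=
        norm_image_sub_le_of_norm_deriv_le_segment' hg bound₁ b (right_mem_Icc.2 hab)
    _ = C * (b - a) ^ 2 := by ring

variable {u u₁ u₂ u₃ : ℝ → E}

theorem hasDerivAt_midpoint_reconstruction (hu : ∀ y, HasDerivAt u (u₁ y) y)
    (hu₁ : ∀ y, HasDerivAt u₁ (u₂ y) y) (x t : ℝ) :
    HasDerivAt
      (fun s : ℝ => (1 / 2 : ℝ) • (u (x - s) + u (x + s)) + (s / 4) • (u₁ (x - s) - u₁ (x + s)))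
      ((1 / 4 : ℝ) • (u₁ (x + t) - u₁ (x - t)) - (t / 4) • (u₂ (x - t) + u₂ (x + t))) t := by
  have H := ((((hu _).comp_const_sub x t).add ((hu _).comp_const_add x t)).const_smul
    (1 / 2 : ℝ)).add (((hasDerivAt_id t).div_const 4).smul
      (((hu₁ _).comp_const_sub x t).sub ((hu₁ _).comp_const_add x t)))
  refine H.congr_deriv ?_
  simp only [id, Pi.sub_apply]
  module

theorem hasDerivAt_midpoint_reconstruction_deriv (hu₁ : ∀ y, HasDerivAt u₁ (u₂ y) y)
    (hu₂ : ∀ y, HasDerivAt u₂ (u₃ y) y) (x t : ℝ) :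
    HasDerivAt
      (fun s : ℝ => (1 / 4 : ℝ) • (u₁ (x + s) - u₁ (x - s)) - (s / 4) • (u₂ (x - s) + u₂ (x + s)))
      ((t / 4) • (u₃ (x - t) - u₃ (x + t))) t := by
  have H := ((((hu₁ _).comp_const_add x t).sub ((hu₁ _).comp_const_sub x t)).const_smul
    (1 / 4 : ℝ)).sub (((hasDerivAt_id t).div_const 4).smul
      (((hu₂ _).comp_const_sub x t).add ((hu₂ _).comp_const_add x t)))
  refine H.congr_deriv ?_
  simp only [id, Pi.add_apply]
  module

end

/-- Third-order accuracy of the staggered midpoint reconstruction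
`(u_i + u_{i+1})/2 + (u'_i - u'_{i+1})/8` where `u'_j = Δx·u'(x_j)`. -/
theorem nt_reconstruction_third_order (u : ℝ → ℝ) (xm Δx M : ℝ)
    (hΔx : 0 < Δx) (hu : ContDiff ℝ 3 u)
    (hM : ∀ x ∈ Set.Icc (xm - Δx / 2) (xm + Δx / 2), |iteratedDeriv 3 u x| ≤ M) :
    |(1 / 2) * (u (xm - Δx / 2) + u (xm + Δx / 2))
      + (1 / 8) * (Δx * deriv u (xm - Δx / 2) - Δx * deriv u (xm + Δx / 2))
      - u xm| ≤ M * Δx ^ 3 := by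
  set h := Δx / 2 with hh
  have hM0 : 0 ≤ M := (abs_nonneg _).trans (hM xm ⟨by linarith, by linarith⟩)
  have hd (m : ℕ) (hm : m < 3) := hu.hasDerivAt_iteratedDeriv (m := m) (by exact_mod_cast hm)
  have bound (t : ℝ) (ht : t ∈ Icc 0 h) :
      ‖(t / 4) • (iteratedDeriv 3 u (xm - t) - iteratedDeriv 3 u (xm + t))‖ ≤ M * h / 2 := by
    have h₁ := hM (xm - t) ⟨by linarith [ht.2], by linarith [ht.1]⟩
    have h₂ := hM (xm + t) ⟨by linarith [ht.1], by linarith [ht.2]⟩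
    rw [norm_smul, Real.norm_of_nonneg (by linarith [ht.1]), Real.norm_eq_abs]
    calc t / 4 * |_| ≤ h / 4 * (M + M) := by
          gcongr
          exacts [ht.2, (abs_sub _ _).trans (add_le_add h₁ h₂)]
      _ = M * h / 2 := by ring
  have key := norm_image_sub_le_of_norm_deriv2_le_segment (by positivity : (0 : ℝ) ≤ h)
    (fun t _ => (hasDerivAt_midpoint_reconstruction (hd 0 (by norm_num)) (hd 1 (by norm_num))
      xm t).hasDerivWithinAt)
    (fun t _ => (hasDerivAt_midpoint_reconstruction_deriv (hd 1 (by norm_num))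
      (hd 2 (by norm_num)) xm t).hasDerivWithinAt)
    (by simp) bound
  simp only [zero_add, iteratedDeriv_zero, iteratedDeriv_one, smul_eq_mul, Real.norm_eq_abs,
    sub_zero, add_zero, zero_div, zero_mul] at key
  calc _ = |1 / 2 * (u (xm - h) + u (xm + h)) + h / 4 * (deriv u (xm - h) - deriv u (xm + h))
        - 1 / 2 * (u xm + u xm)| := by congr 1; ring
    _ ≤ M * h / 2 * h ^ 2 := key
    _ ≤ M * Δx ^ 3 := by rw [hh]; nlinarith [mul_nonneg hM0 (pow_nonneg hΔx.le 3)]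
end
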